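/- arXiv:1909.11792 — 10 statements merged into one kernel-verified Lean document; each statement's English description precedes it below -/
import Mathlib

section
/- Let f : ℝⁿ → ℝⁿ. Suppose every function ι g for g ∈ H is differentiable on ℝⁿ, and that for every x ∈ ℝⁿ and every v ∈ ℝⁿ the linear functional g ↦ D(ι g)(x) v is continuous on H (so H-norm convergence implies pointwise convergence of directional derivatives). Then the Liouville operator A_f is closed: if (g_m) is a sequence with each g_m ∈ D(A_f), g_m → g in H, and A_f g_m → h in H, then g ∈ D(A_f) and A_f g = h. -/
open scoped RealInnerProductSpace

/-- The Liouville operator `A_f` is closed: if `g m ∈ D(A_f)` with images `Ag m`,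
`g m → G` in `H`, and `Ag m → h` in `H`, then `G ∈ D(A_f)` with `A_f G = h`. -/
theorem liouville_operator_closed
    {n : ℕ} (hn : 1 ≤ n) {H : Type*} [NormedAddCommGroup H] [InnerProductSpace ℝ H]
    [CompleteSpace H]
    (ι : H →ₗ[ℝ] (EuclideanSpace ℝ (Fin n) → ℝ)) (hι : Function.Injective ι)
    (k : EuclideanSpace ℝ (Fin n) → H)
    (hrep : ∀ (g : H) (x : EuclideanSpace ℝ (Fin n)), ι g x = ⟪g, k x⟫)
    (f : EuclideanSpace ℝ (Fin n) → EuclideanSpace ℝ (Fin n))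
    (hdiff : ∀ (g : H) (x : EuclideanSpace ℝ (Fin n)), DifferentiableAt ℝ (ι g) x)
    (hcont : ∀ (x v : EuclideanSpace ℝ (Fin n)),
      Continuous (fun g : H => fderiv ℝ (ι g) x v))
    (g : ℕ → H) (Ag : ℕ → H)
    (hdom : ∀ (m : ℕ) (x : EuclideanSpace ℝ (Fin n)),
      ι (Ag m) x = fderiv ℝ (ι (g m)) x (f x))
    (G h : H)
    (hg : Filter.Tendsto g Filter.atTop (nhds G))
    (hAg : Filter.Tendsto Ag Filter.atTop (nhds h)) :
    ∀ x : EuclideanSpace ℝ (Fin n), ι h x = fderiv ℝ (ι G) x (f x) := by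
  intro x
  have h1 : Filter.Tendsto (fun m => ι (Ag m) x) Filter.atTop (nhds (ι h x)) := by
    simp only [hrep]
    exact ((continuous_inner (𝕜 := ℝ)).comp (Continuous.prodMk continuous_id
      continuous_const)).continuousAt.tendsto.comp hAg
  have h2 : Filter.Tendsto (fun m => fderiv ℝ (ι (g m)) x (f x)) Filter.atTop
      (nhds (fderiv ℝ (ι G) x (f x))) :=
    ((hcont x (f x)).continuousAt.tendsto.comp hg)
  have : (fun m => ι (Ag m) x) = fun m => fderiv ℝ (ι (g m)) x (f x) := by
    funext m; exact hdom m x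
  rw [this] at h1
  exact tendsto_nhds_unique h1 h2
end

section
/- Assume k : ℝⁿ → H is continuous. Then for every T > 0 and every continuous curve γ : [0,T] → ℝⁿ, the linear functional g ↦ ∫₀ᵀ (ι g)(γ t) dt is bounded on H, and consequently there exists a unique element Γ_γ ∈ H (the occupation kernel of γ) satisfying ⟪g, Γ_γ⟫ = ∫₀ᵀ (ι g)(γ t) dt for all g ∈ H. -/
open scoped RealInnerProductSpace

/-- For a continuous curve `γ : [0,T] → ℝⁿ`, the functional `g ↦ ∫₀ᵀ (ι g)(γ t) dt`
is bounded on `H`, and there is a unique occupation kernel `Γ ∈ H` representing it. -/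
theorem occupation_kernel_exists_unique
    {n : ℕ} (hn : 1 ≤ n) {H : Type*} [NormedAddCommGroup H] [InnerProductSpace ℝ H]
    [CompleteSpace H]
    (ι : H →ₗ[ℝ] (EuclideanSpace ℝ (Fin n) → ℝ)) (hι : Function.Injective ι)
    (k : EuclideanSpace ℝ (Fin n) → H)
    (hrep : ∀ (g : H) (x : EuclideanSpace ℝ (Fin n)), ι g x = ⟪g, k x⟫)
    (hk : Continuous k)
    (T : ℝ) (hT : 0 < T)
    (γ : ℝ → EuclideanSpace ℝ (Fin n)) (hγ : ContinuousOn γ (Set.Icc 0 T)) :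
    (∃ C : ℝ, ∀ g : H, |∫ t in (0:ℝ)..T, ι g (γ t)| ≤ C * ‖g‖) ∧
      (∃! Γ : H, ∀ g : H, ⟪g, Γ⟫ = ∫ t in (0:ℝ)..T, ι g (γ t)) := by
  have hkγ : ContinuousOn (fun t => k (γ t)) (Set.uIcc 0 T) := by
    rw [Set.uIcc_of_le hT.le]
    exact hk.comp_continuousOn hγ
  have hint : IntervalIntegrable (fun t => k (γ t)) MeasureTheory.volume 0 T :=
    hkγ.intervalIntegrable
  set Γ : H := ∫ t in (0:ℝ)..T, k (γ t)
  have hΓ : ∀ g : H, ⟪g, Γ⟫ = ∫ t in (0:ℝ)..T, ι g (γ t) := by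
    intro g
    have := (innerSL ℝ g).intervalIntegral_comp_comm hint
    simp only [innerSL_apply_apply] at this
    rw [← this]
    simp only [hrep]
  refine ⟨⟨‖Γ‖, fun g => ?_⟩, Γ, hΓ, fun Γ' hΓ' => ?_⟩
  · rw [← hΓ g, ← Real.norm_eq_abs, mul_comm]
    exact norm_inner_le_norm g Γ
  · have : ∀ g : H, ⟪g, Γ' - Γ⟫ = 0 := by
      intro g
      rw [inner_sub_right, hΓ g, hΓ' g, sub_self]
    have := this (Γ' - Γ)
    rw [inner_self_eq_zero, sub_eq_zero] at this
    exact this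
end

section
/- Let f : ℝⁿ → ℝⁿ, let T > 0, let γ : [0,T] → ℝⁿ be differentiable with γ'(t) = f(γ t) for all t ∈ [0,T], and let Γ_γ ∈ H be an occupation kernel of γ. Assume every ι g for g ∈ H is differentiable on ℝⁿ. Then for every g ∈ D(A_f): ⟪A_f g, Γ_γ⟫ = (ι g)(γ T) − (ι g)(γ 0) = ⟪g, k(γ T) − k(γ 0)⟫. In particular |⟪A_f g, Γ_γ⟫| ≤ ‖g‖ · ‖k(γ T) − k(γ 0)‖ for all g ∈ D(A_f), so the adjoint of A_f maps Γ_γ to k(γ T) − k(γ 0). -/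
open scoped RealInnerProductSpace

open Set in
theorem integral_comp_eq_sub_of_hasDerivAt_trajectory {E F : Type*}
    [NormedAddCommGroup E] [NormedSpace ℝ E] [NormedAddCommGroup F] [NormedSpace ℝ F]
    [CompleteSpace F] {φ ψ : E → F} {f : E → E} {γ : ℝ → E} {a b : ℝ}
    (hγ : ∀ t ∈ uIcc a b, HasDerivAt γ (f (γ t)) t)
    (hφ : ∀ t ∈ uIcc a b, DifferentiableAt ℝ φ (γ t))
    (hψ : ∀ x, ψ x = fderiv ℝ φ x (f x)) (hψc : Continuous ψ) :
    ∫ t in a..b, ψ (γ t) = φ (γ b) - φ (γ a) := by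
  have hderiv : ∀ t ∈ uIcc a b, HasDerivAt (φ ∘ γ) (ψ (γ t)) t := fun t ht => by
    rw [hψ]
    exact (hφ t ht).hasFDerivAt.comp_hasDerivAt t (hγ t ht)
  have hγc : ContinuousOn γ (uIcc a b) := fun t ht =>
    (hγ t ht).continuousAt.continuousWithinAt
  exact intervalIntegral.integral_eq_sub_of_hasDerivAt hderiv
    (hψc.comp_continuousOn hγc).intervalIntegrable

theorem adjoint_liouville_on_occupation_kernel_general
    {n : ℕ} {H : Type*} [NormedAddCommGroup H] [InnerProductSpace ℝ H]
    (ι : H →ₗ[ℝ] (EuclideanSpace ℝ (Fin n) → ℝ))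
    (k : EuclideanSpace ℝ (Fin n) → H)
    (hrep : ∀ (g : H) (x : EuclideanSpace ℝ (Fin n)), ι g x = ⟪g, k x⟫)
    (f : EuclideanSpace ℝ (Fin n) → EuclideanSpace ℝ (Fin n))
    (T : ℝ) (hT : 0 < T)
    (γ : ℝ → EuclideanSpace ℝ (Fin n))
    (hγ : ∀ t ∈ Set.Icc (0:ℝ) T, HasDerivAt γ (f (γ t)) t)
    (Γ : H) (hΓ : ∀ g : H, ⟪g, Γ⟫ = ∫ t in (0:ℝ)..T, ι g (γ t))
    (hdiff : ∀ (g : H) (x : EuclideanSpace ℝ (Fin n)), DifferentiableAt ℝ (ι g) x) :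
    ∀ g Ag : H, (∀ x : EuclideanSpace ℝ (Fin n), ι Ag x = fderiv ℝ (ι g) x (f x)) →
      ⟪Ag, Γ⟫ = ι g (γ T) - ι g (γ 0) ∧
      ι g (γ T) - ι g (γ 0) = ⟪g, k (γ T) - k (γ 0)⟫ ∧
      |⟪Ag, Γ⟫| ≤ ‖g‖ * ‖k (γ T) - k (γ 0)‖ := by
  intro g Ag hAg
  have hγ' : ∀ t ∈ Set.uIcc 0 T, HasDerivAt γ (f (γ t)) t := by
    rwa [Set.uIcc_of_le hT.le]
  have hflow : ⟪Ag, Γ⟫ = ι g (γ T) - ι g (γ 0) := by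
    rw [hΓ Ag]
    exact integral_comp_eq_sub_of_hasDerivAt_trajectory hγ' (fun t _ => hdiff g (γ t)) hAg
      (Differentiable.continuous (hdiff Ag))
  have hkernel : ι g (γ T) - ι g (γ 0) = ⟪g, k (γ T) - k (γ 0)⟫ := by
    rw [hrep, hrep, inner_sub_right]
  refine ⟨hflow, hkernel, ?_⟩
  rw [hflow, hkernel]
  exact abs_real_inner_le_norm g _

/-- If `γ` solves `γ' = f ∘ γ` on `[0,T]` with occupation kernel `Γ`, then for every
`g ∈ D(A_f)` (with image `Ag = A_f g`) one has
`⟪A_f g, Γ⟫ = (ι g)(γ T) − (ι g)(γ 0) = ⟪g, k (γ T) − k (γ 0)⟫`, and in particular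
`|⟪A_f g, Γ⟫| ≤ ‖g‖ ⬝ ‖k (γ T) − k (γ 0)‖`; so `A_f* Γ = k (γ T) − k (γ 0)`. -/
theorem adjoint_liouville_on_occupation_kernel
    {n : ℕ} (hn : 1 ≤ n) {H : Type*} [NormedAddCommGroup H] [InnerProductSpace ℝ H]
    [CompleteSpace H]
    (ι : H →ₗ[ℝ] (EuclideanSpace ℝ (Fin n) → ℝ)) (hι : Function.Injective ι)
    (k : EuclideanSpace ℝ (Fin n) → H)
    (hrep : ∀ (g : H) (x : EuclideanSpace ℝ (Fin n)), ι g x = ⟪g, k x⟫)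
    (f : EuclideanSpace ℝ (Fin n) → EuclideanSpace ℝ (Fin n))
    (T : ℝ) (hT : 0 < T)
    (γ : ℝ → EuclideanSpace ℝ (Fin n))
    (hγ : ∀ t ∈ Set.Icc (0:ℝ) T, HasDerivAt γ (f (γ t)) t)
    (Γ : H) (hΓ : ∀ g : H, ⟪g, Γ⟫ = ∫ t in (0:ℝ)..T, ι g (γ t))
    (hdiff : ∀ (g : H) (x : EuclideanSpace ℝ (Fin n)), DifferentiableAt ℝ (ι g) x) :
    ∀ g Ag : H, (∀ x : EuclideanSpace ℝ (Fin n), ι Ag x = fderiv ℝ (ι g) x (f x)) →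
      ⟪Ag, Γ⟫ = ι g (γ T) - ι g (γ 0) ∧
      ι g (γ T) - ι g (γ 0) = ⟪g, k (γ T) - k (γ 0)⟫ ∧
      |⟪Ag, Γ⟫| ≤ ‖g‖ * ‖k (γ T) - k (γ 0)‖ :=
  adjoint_liouville_on_occupation_kernel_general ι k hrep f T hT γ hγ Γ hΓ hdiff
end

section
/- Let f : ℝⁿ → ℝⁿ. Assume: (i) every function ι g for g ∈ H is real analytic on ℝⁿ; (ii) for every x ∈ ℝⁿ and every v ∈ ℝⁿ the linear functional g ↦ D(ι g)(x) v is continuous on H; (iii) the gradients are universal, i.e., for every x ∈ ℝⁿ and every nonzero v ∈ ℝⁿ there exists g ∈ H with D(ι g)(x) v ≠ 0; and (iv) the domain D(A_f) is dense in H. Then f is real analytic on ℝⁿ, i.e., every component function x ↦ (f x)_i is real analytic on ℝⁿ. -/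
/-!
The functionals `g ↦ D(ι g)(x)` separate the points of `ℝⁿ`, hence fill the dual space, so some
`g₁, …, gₙ` have linearly independent derivatives at `x`. Linear independence is an open condition
in `(g₁, …, gₙ)` and the domain of `A_f` is dense, so the `g_j` may be taken in that domain. Then
`ι (A_f g_j) (y) = ∑ₗ ∂ₗ(ι g_j)(y) fₗ(y)` is a linear system for `f y` whose coefficients and
right-hand side are analytic and whose matrix is invertible near `x`; Cramer's rule makes `f`
analytic at `x`.
-/

open Filter Topology
open scoped Matrix

section MatrixAnalytic

variable {𝕜 E : Type*} [NontriviallyNormedField 𝕜] [NormedAddCommGroup E] [NormedSpace 𝕜 E]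
  {m : Type*} [Fintype m] [DecidableEq m] {M : E → Matrix m m 𝕜} {x : E}

theorem AnalyticAt.matrix_det (hM : ∀ i j, AnalyticAt 𝕜 (fun y => M y i j) x) :
    AnalyticAt 𝕜 (fun y => (M y).det) x := by
  simp_rw [Matrix.det_apply, Units.smul_def, zsmul_eq_mul]
  exact Finset.analyticAt_fun_sum _ fun σ _ =>
    analyticAt_const.mul (Finset.analyticAt_fun_prod _ fun i _ => hM (σ i) i)

theorem AnalyticAt.matrix_adjugate (hM : ∀ i j, AnalyticAt 𝕜 (fun y => M y i j) x) (i j : m) :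
    AnalyticAt 𝕜 (fun y => (M y).adjugate i j) x := by
  simp_rw [Matrix.adjugate_apply]
  refine AnalyticAt.matrix_det fun a b => ?_
  by_cases hab : a = j
  · simpa only [Matrix.updateRow_apply, hab, if_pos] using analyticAt_const
  · simpa only [Matrix.updateRow_apply, if_neg hab] using hM a b

theorem AnalyticAt.matrix_inv (hM : ∀ i j, AnalyticAt 𝕜 (fun y => M y i j) x)
    (hx : (M x).det ≠ 0) (i j : m) : AnalyticAt 𝕜 (fun y => (M y)⁻¹ i j) x := by
  simp_rw [Matrix.inv_def, Ring.inverse_eq_inv', Matrix.smul_apply, smul_eq_mul]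
  exact ((AnalyticAt.matrix_det hM).inv hx).mul (AnalyticAt.matrix_adjugate hM i j)

theorem AnalyticAt.of_mulVec_eventuallyEq {u b : E → m → 𝕜}
    (hM : ∀ i j, AnalyticAt 𝕜 (fun y => M y i j) x) (hx : (M x).det ≠ 0)
    (hb : ∀ j, AnalyticAt 𝕜 (fun y => b y j) x) (hu : ∀ᶠ y in 𝓝 x, M y *ᵥ u y = b y) (i : m) :
    AnalyticAt 𝕜 (fun y => u y i) x := by
  have hdet : ∀ᶠ y in 𝓝 x, (M y).det ≠ 0 :=
    (AnalyticAt.matrix_det hM).continuousAt.eventually_ne hx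
  have hinv : AnalyticAt 𝕜 (fun y => ((M y)⁻¹ *ᵥ b y) i) x :=
    Finset.analyticAt_fun_sum _ fun j _ => (AnalyticAt.matrix_inv hM hx i j).mul (hb j)
  refine hinv.congr ?_
  filter_upwards [hu, hdet] with y hy hy'
  rw [← hy, Matrix.mulVec_mulVec, Matrix.nonsing_inv_mul _ (isUnit_iff_ne_zero.mpr hy'),
    Matrix.one_mulVec]

end MatrixAnalytic

theorem Module.Basis.mulVec_repr_eq_apply {R M ι m : Type*} [CommSemiring R] [AddCommMonoid M]
    [Module R M] [Fintype ι] (b : Module.Basis ι R M) (φ : m → M →ₗ[R] R) (v : M) :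
    Matrix.of (fun j l => φ j (b l)) *ᵥ b.repr v = fun j => φ j v := by
  funext j
  conv_rhs => rw [← b.sum_repr v]
  simp only [Matrix.mulVec, dotProduct, Matrix.of_apply, map_sum, map_smul, smul_eq_mul, mul_comm]

theorem Dense.exists_forall_mem_det_ne_zero {H R m : Type*} [TopologicalSpace H] [CommRing R]
    [TopologicalSpace R] [IsTopologicalRing R] [T1Space R] [Fintype m] [DecidableEq m] {D : Set H}
    (hD : Dense D) {A : H → m → R} (hA : ∀ l, Continuous fun g => A g l)
    (h₀ : ∃ G : m → H, (Matrix.of fun j l => A (G j) l).det ≠ 0) :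
    ∃ G : m → H, (∀ j, G j ∈ D) ∧ (Matrix.of fun j l => A (G j) l).det ≠ 0 := by
  have hopen : IsOpen {G : m → H | (Matrix.of fun j l => A (G j) l).det ≠ 0} :=
    isOpen_compl_singleton.preimage
      (continuous_matrix fun j l => (hA l).comp (continuous_apply j)).matrix_det
  have hDpi : Dense (Set.univ.pi fun _ : m => D) := dense_pi _ fun _ _ => hD
  obtain ⟨G, hG, hGD⟩ := hDpi.inter_open_nonempty _ hopen h₀
  exact ⟨G, fun j => hGD j (Set.mem_univ j), hG⟩

section Liouville

variable {𝕜 H E F : Type*} [NontriviallyNormedField 𝕜] [AddCommGroup H] [Module 𝕜 H]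
  [NormedAddCommGroup E] [NormedSpace 𝕜 E] [NormedAddCommGroup F] [NormedSpace 𝕜 F]

noncomputable def fderivAtLinearMap (ι : H →ₗ[𝕜] E → F) (x : E)
    (hd : ∀ g, DifferentiableAt 𝕜 (ι g) x) : H →ₗ[𝕜] E →ₗ[𝕜] F where
  toFun g := fderiv 𝕜 (ι g) x
  map_add' g h := by
    rw [map_add, fderiv_add (hd g) (hd h)]
    rfl
  map_smul' c g := by
    rw [map_smul, fderiv_const_smul (hd g)]
    rfl

theorem fderivAtLinearMap_surjective [FiniteDimensional 𝕜 E] (ι : H →ₗ[𝕜] E → 𝕜) (x : E)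
    (hd : ∀ g, DifferentiableAt 𝕜 (ι g) x) (huniv : ∀ v, v ≠ 0 → ∃ g, fderiv 𝕜 (ι g) x v ≠ 0) :
    Function.Surjective (fderivAtLinearMap ι x hd) := by
  refine LinearMap.flip_injective_iff₂.mp ((injective_iff_map_eq_zero _).mpr fun v hv => ?_)
  by_contra hv0
  obtain ⟨g, hg⟩ := huniv v hv0
  exact hg (LinearMap.congr_fun hv g)

theorem exists_det_fderiv_ne_zero [FiniteDimensional 𝕜 E] {m : Type*} [Fintype m]
    [DecidableEq m] (ι : H →ₗ[𝕜] E → 𝕜) (x : E) (hd : ∀ g, DifferentiableAt 𝕜 (ι g) x)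
    (huniv : ∀ v, v ≠ 0 → ∃ g, fderiv 𝕜 (ι g) x v ≠ 0) (b : Module.Basis m 𝕜 E) :
    ∃ G : m → H, (Matrix.of fun j l => fderiv 𝕜 (ι (G j)) x (b l)).det ≠ 0 := by
  choose G hG using fun j => fderivAtLinearMap_surjective ι x hd huniv (b.coord j)
  refine ⟨G, ?_⟩
  have hGb : (Matrix.of fun j l => fderiv 𝕜 (ι (G j)) x (b l)) = 1 := by
    ext j l
    change fderivAtLinearMap ι x hd (G j) (b l) = _
    simp [hG, Matrix.one_apply, Finsupp.single_apply, eq_comm]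
  simp [hGb]

end Liouville

open scoped RealInnerProductSpace

theorem symbol_of_densely_defined_liouville_real_analytic_general
    {n : ℕ} {H : Type*} [NormedAddCommGroup H] [InnerProductSpace ℝ H]
    (ι : H →ₗ[ℝ] (EuclideanSpace ℝ (Fin n) → ℝ))
    (f : EuclideanSpace ℝ (Fin n) → EuclideanSpace ℝ (Fin n))
    (hanalytic : ∀ (g : H) (x : EuclideanSpace ℝ (Fin n)), AnalyticAt ℝ (ι g) x)
    (hcont : ∀ (x v : EuclideanSpace ℝ (Fin n)),
      Continuous (fun g : H => fderiv ℝ (ι g) x v))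
    (huniv : ∀ (x v : EuclideanSpace ℝ (Fin n)), v ≠ 0 →
      ∃ g : H, fderiv ℝ (ι g) x v ≠ 0)
    (hdense : Dense {g : H | ∃ Ag : H,
      ∀ x : EuclideanSpace ℝ (Fin n), ι Ag x = fderiv ℝ (ι g) x (f x)}) :
    ∀ (i : Fin n) (x : EuclideanSpace ℝ (Fin n)), AnalyticAt ℝ (fun y => f y i) x := by
  intro i x
  let b := (EuclideanSpace.basisFun (Fin n) ℝ).toBasis
  obtain ⟨G, hGD, hGx⟩ := hdense.exists_forall_mem_det_ne_zero (fun l => hcont x (b l))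
    (exists_det_fderiv_ne_zero ι x (fun g => (hanalytic g x).differentiableAt) (huniv x) b)
  choose Ag hAg using hGD
  have hM : ∀ j l, AnalyticAt ℝ (fun y => fderiv ℝ (ι (G j)) y (b l)) x := fun j l =>
    ((ContinuousLinearMap.apply ℝ ℝ (b l)).analyticAt _).comp (hanalytic (G j) x).fderiv
  have hsystem : ∀ y, (Matrix.of fun j l => fderiv ℝ (ι (G j)) y (b l)) *ᵥ b.repr (f y) =
      fun j => ι (Ag j) y := fun y =>
    (b.mulVec_repr_eq_apply (fun j => (fderiv ℝ (ι (G j)) y : _ →ₗ[ℝ] ℝ)) (f y)).trans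
      (funext fun j => (hAg j y).symm)
  simpa [b] using AnalyticAt.of_mulVec_eventuallyEq hM hGx (fun j => hanalytic (Ag j) x)
    (Eventually.of_forall hsystem) i

/-- If every `ι g` is real analytic, directional-derivative functionals are continuous,
the gradients are universal, and the domain of the Liouville operator `A_f` is dense,
then the symbol `f` is real analytic (componentwise). -/
theorem symbol_of_densely_defined_liouville_real_analytic
    {n : ℕ} (hn : 1 ≤ n) {H : Type*} [NormedAddCommGroup H] [InnerProductSpace ℝ H]
    [CompleteSpace H]
    (ι : H →ₗ[ℝ] (EuclideanSpace ℝ (Fin n) → ℝ)) (hι : Function.Injective ι)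
    (k : EuclideanSpace ℝ (Fin n) → H)
    (hrep : ∀ (g : H) (x : EuclideanSpace ℝ (Fin n)), ι g x = ⟪g, k x⟫)
    (f : EuclideanSpace ℝ (Fin n) → EuclideanSpace ℝ (Fin n))
    (hanalytic : ∀ (g : H) (x : EuclideanSpace ℝ (Fin n)), AnalyticAt ℝ (ι g) x)
    (hcont : ∀ (x v : EuclideanSpace ℝ (Fin n)),
      Continuous (fun g : H => fderiv ℝ (ι g) x v))
    (huniv : ∀ (x v : EuclideanSpace ℝ (Fin n)), v ≠ 0 →
      ∃ g : H, fderiv ℝ (ι g) x v ≠ 0)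
    (hdense : Dense {g : H | ∃ Ag : H,
      ∀ x : EuclideanSpace ℝ (Fin n), ι Ag x = fderiv ℝ (ι g) x (f x)}) :
    ∀ (i : Fin n) (x : EuclideanSpace ℝ (Fin n)), AnalyticAt ℝ (fun y => f y i) x :=
  symbol_of_densely_defined_liouville_real_analytic_general ι f hanalytic hcont huniv hdense
end

section
/- Assume k : ℝⁿ → H is continuous. Let T > 0, let γ : [0,T] → ℝⁿ be continuous, and let Γ_γ ∈ H be the occupation kernel of γ. Then for every x ∈ ℝⁿ: (ι Γ_γ)(x) = ∫₀ᵀ K(x, γ t) dt, where K(x,y) = ⟪k y, k x⟫; equivalently, Γ_γ = ∫₀ᵀ k(γ t) dt as a Bochner integral in H. -/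
open scoped RealInnerProductSpace

open MeasureTheory

section IntervalIntegralInner

variable {E : Type*} [NormedAddCommGroup E] [InnerProductSpace ℝ E] [CompleteSpace E]
  {f : ℝ → E} {a b : ℝ}

theorem intervalIntegral_inner_left (hf : IntervalIntegrable f volume a b) (c : E) :
    ∫ t in a..b, ⟪c, f t⟫ = ⟪c, ∫ t in a..b, f t⟫ :=
  (innerSL ℝ c).intervalIntegral_comp_comm hf

theorem intervalIntegral_inner_right (hf : IntervalIntegrable f volume a b) (c : E) :
    ∫ t in a..b, ⟪f t, c⟫ = ⟪∫ t in a..b, f t, c⟫ := by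
  simpa only [real_inner_comm c] using intervalIntegral_inner_left hf c

theorem eq_intervalIntegral_of_forall_inner_eq (hf : IntervalIntegrable f volume a b) {v : E}
    (hv : ∀ c : E, ⟪c, v⟫ = ∫ t in a..b, ⟪c, f t⟫) : v = ∫ t in a..b, f t :=
  ext_inner_left ℝ fun c => by rw [hv, intervalIntegral_inner_left hf]

end IntervalIntegralInner

theorem occupation_kernel_integral_representation_general
    {n : ℕ} {H : Type*} [NormedAddCommGroup H] [InnerProductSpace ℝ H]
    [CompleteSpace H]
    (ι : H →ₗ[ℝ] (EuclideanSpace ℝ (Fin n) → ℝ))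
    (k : EuclideanSpace ℝ (Fin n) → H)
    (hrep : ∀ (g : H) (x : EuclideanSpace ℝ (Fin n)), ι g x = ⟪g, k x⟫)
    (hk : Continuous k)
    (T : ℝ) (hT : 0 < T)
    (γ : ℝ → EuclideanSpace ℝ (Fin n)) (hγ : ContinuousOn γ (Set.Icc 0 T))
    (Γ : H) (hΓ : ∀ g : H, ⟪g, Γ⟫ = ∫ t in (0:ℝ)..T, ι g (γ t)) :
    (∀ x : EuclideanSpace ℝ (Fin n), ι Γ x = ∫ t in (0:ℝ)..T, ⟪k (γ t), k x⟫) ∧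
      Γ = ∫ t in (0:ℝ)..T, k (γ t) := by
  have hint : IntervalIntegrable (fun t => k (γ t)) volume 0 T :=
    (hk.comp_continuousOn hγ).intervalIntegrable_of_Icc hT.le
  have hΓ_eq : Γ = ∫ t in (0:ℝ)..T, k (γ t) :=
    eq_intervalIntegral_of_forall_inner_eq hint fun g => by simp only [hΓ g, hrep]
  refine ⟨fun x => ?_, hΓ_eq⟩
  rw [hrep, hΓ_eq, intervalIntegral_inner_right hint]

/-- Integral representation of the occupation kernel: pointwise,
`(ι Γ)(x) = ∫₀ᵀ K(x, γ t) dt` with `K(x,y) = ⟪k y, k x⟫`; equivalently, `Γ` is the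
Bochner integral `∫₀ᵀ k (γ t) dt` in `H`. -/
theorem occupation_kernel_integral_representation
    {n : ℕ} (hn : 1 ≤ n) {H : Type*} [NormedAddCommGroup H] [InnerProductSpace ℝ H]
    [CompleteSpace H]
    (ι : H →ₗ[ℝ] (EuclideanSpace ℝ (Fin n) → ℝ)) (hι : Function.Injective ι)
    (k : EuclideanSpace ℝ (Fin n) → H)
    (hrep : ∀ (g : H) (x : EuclideanSpace ℝ (Fin n)), ι g x = ⟪g, k x⟫)
    (hk : Continuous k)
    (T : ℝ) (hT : 0 < T)
    (γ : ℝ → EuclideanSpace ℝ (Fin n)) (hγ : ContinuousOn γ (Set.Icc 0 T))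
    (Γ : H) (hΓ : ∀ g : H, ⟪g, Γ⟫ = ∫ t in (0:ℝ)..T, ι g (γ t)) :
    (∀ x : EuclideanSpace ℝ (Fin n), ι Γ x = ∫ t in (0:ℝ)..T, ⟪k (γ t), k x⟫) ∧
      Γ = ∫ t in (0:ℝ)..T, k (γ t) :=
  occupation_kernel_integral_representation_general ι k hrep hk T hT γ hγ Γ hΓ
end

section
/- Let T > 0, let γ : [0,T] → ℝⁿ be continuously differentiable, assume the kernel function K(x,y) = ⟪k y, k x⟫ is continuously differentiable on ℝⁿ × ℝⁿ, and let Γ_γ ∈ H be the occupation kernel of γ. Then there exists a constant C ≥ 0 such that for every partition 0 = t₀ < t₁ < ⋯ < t_F = T, setting h := max_{1 ≤ i ≤ F} (t_i − t_{i−1}) and Γ̂ := Σ_{i=1}^{F} (t_i − t_{i−1}) · k(γ t_i), one has ‖Γ_γ − Γ̂‖² ≤ C · h. -/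
open scoped RealInnerProductSpace NNReal
open Set MeasureTheory

/-!
Write `K(x, y) = ⟪k y, k x⟫`. Then `‖k x - k y‖² = (K(x,x) - K(y,x)) + (K(y,y) - K(x,y))`, so a
kernel that is Lipschitz on a compact set makes the feature map `k` Hölder-`1/2` there:
`‖k x - k y‖² ≤ 2 L ‖x - y‖`. A `C¹` kernel is Lipschitz on the compact set `γ([0,T])²` and `γ` is
Lipschitz on `[0,T]`, hence `‖k (γ s) - k (γ u)‖² ≤ B |s - u|`. Since `Γ = ∫₀ᵀ k (γ s) ds`, the
error of the right Riemann sum is at most `√(B h) · T` on each partition of mesh `h`, and squaring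
gives `‖Γ - Γ̂‖² ≤ B T² h`.
-/

section FeatureMap

variable {X H : Type*} [NormedAddCommGroup H] [InnerProductSpace ℝ H]

def featureKernel (k : X → H) (p : X × X) : ℝ := ⟪k p.2, k p.1⟫

theorem norm_sub_sq_eq_featureKernel (k : X → H) (x y : X) :
    ‖k x - k y‖ ^ 2 = (featureKernel k (x, x) - featureKernel k (y, x)) +
      (featureKernel k (y, y) - featureKernel k (x, y)) := by
  simp only [featureKernel, real_inner_self_eq_norm_sq, real_inner_comm (k x) (k y),
    norm_sub_sq_real]
  ring

theorem continuous_of_continuous_featureKernel [TopologicalSpace X] {k : X → H}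
    (hK : Continuous (featureKernel k)) : Continuous k := by
  refine continuous_iff_continuousAt.2 fun y => tendsto_iff_norm_sub_tendsto_zero.2 ?_
  have hsqrt : Continuous fun x => √((featureKernel k (x, x) - featureKernel k (y, x)) +
      (featureKernel k (y, y) - featureKernel k (x, y))) := by
    fun_prop
  simpa [← norm_sub_sq_eq_featureKernel, Real.sqrt_sq (norm_nonneg _)] using hsqrt.tendsto y

theorem norm_sub_sq_le_of_lipschitzOnWith_featureKernel [PseudoMetricSpace X] {k : X → H}
    {s : Set X} {L : ℝ≥0} (hK : LipschitzOnWith L (featureKernel k) (s ×ˢ s)) {x y : X}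
    (hx : x ∈ s) (hy : y ∈ s) : ‖k x - k y‖ ^ 2 ≤ 2 * L * dist x y := by
  have hxy : featureKernel k (x, x) - featureKernel k (y, x) ≤ L * dist x y := by
    have := hK.dist_le_mul (x, x) ⟨hx, hx⟩ (y, x) ⟨hy, hx⟩
    rw [Real.dist_eq, Prod.dist_eq, dist_self, max_eq_left dist_nonneg] at this
    exact (le_abs_self _).trans this
  have hyx : featureKernel k (y, y) - featureKernel k (x, y) ≤ L * dist x y := by
    have := hK.dist_le_mul (y, y) ⟨hy, hy⟩ (x, y) ⟨hx, hy⟩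
    rw [Real.dist_eq, Prod.dist_eq, dist_self, max_eq_left dist_nonneg, dist_comm] at this
    exact (le_abs_self _).trans this
  rw [norm_sub_sq_eq_featureKernel]
  linarith

theorem exists_norm_comp_sub_sq_le_mul_abs_sub {E : Type*} [NormedAddCommGroup E]
    [NormedSpace ℝ E] {k : E → H} (hK : ContDiff ℝ 1 (featureKernel k)) {γ : ℝ → E} {a b : ℝ}
    (hγ : ContDiffOn ℝ 1 γ (Icc a b)) :
    ∃ B : ℝ≥0, ∀ s ∈ Icc a b, ∀ u ∈ Icc a b, ‖k (γ s) - k (γ u)‖ ^ 2 ≤ B * |s - u| := by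
  obtain ⟨M, hM⟩ := hγ.exists_lipschitzOnWith one_ne_zero (convex_Icc a b) isCompact_Icc
  have hcompact : IsCompact (γ '' Icc a b) := isCompact_Icc.image_of_continuousOn hγ.continuousOn
  obtain ⟨L, hL⟩ := hK.locallyLipschitz.locallyLipschitzOn.exists_lipschitzOnWith_of_compact
    (hcompact.prod hcompact)
  refine ⟨2 * L * M, fun s hs u hu => ?_⟩
  calc ‖k (γ s) - k (γ u)‖ ^ 2 ≤ 2 * L * dist (γ s) (γ u) :=
        norm_sub_sq_le_of_lipschitzOnWith_featureKernel hL (mem_image_of_mem γ hs)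
          (mem_image_of_mem γ hu)
    _ ≤ 2 * L * (M * dist s u) := by gcongr; exact hM.dist_le_mul s hs u hu
    _ = ↑(2 * L * M) * |s - u| := by rw [Real.dist_eq]; push_cast; ring

theorem eq_intervalIntegral_of_forall_inner_eq_s7 [CompleteSpace H] {f : ℝ → H} {a b : ℝ}
    (hf : IntervalIntegrable f volume a b) {Γ : H}
    (hΓ : ∀ g : H, ⟪g, Γ⟫ = ∫ s in a..b, ⟪g, f s⟫) : Γ = ∫ s in a..b, f s :=
  ext_inner_left ℝ fun g => by
    rw [hΓ, ← innerSL_apply_apply ℝ, ← (innerSL ℝ g).intervalIntegral_comp_comm hf]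
    rfl

end FeatureMap

theorem Icc_subset_Icc_of_le_succ {t : ℕ → ℝ} {F : ℕ} (ht : ∀ i < F, t i ≤ t (i + 1)) {i : ℕ}
    (hi : i < F) : Icc (t i) (t (i + 1)) ⊆ Icc (t 0) (t F) := by
  have hmono : MonotoneOn t (Iic F) := monotoneOn_of_le_succ ordConnected_Iic
    fun j _ _ hj => by simpa using ht j (Order.succ_le_iff.1 hj)
  exact Icc_subset_Icc (hmono (Nat.zero_le _) hi.le (Nat.zero_le _))
    (hmono (Nat.succ_le_of_lt hi) (mem_Iic.2 le_rfl) hi)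

theorem norm_intervalIntegral_sub_sum_le {E : Type*} [NormedAddCommGroup E] [NormedSpace ℝ E]
    [CompleteSpace E] {f : ℝ → E} {t : ℕ → ℝ} {F : ℕ} (ht : ∀ i < F, t i ≤ t (i + 1))
    (hf : ∀ i < F, IntervalIntegrable f volume (t i) (t (i + 1))) {ε : ℝ}
    (hε : ∀ i < F, ∀ s ∈ Ioc (t i) (t (i + 1)), ‖f s - f (t (i + 1))‖ ≤ ε) :
    ‖(∫ s in t 0..t F, f s) - ∑ i ∈ Finset.range F, (t (i + 1) - t i) • f (t (i + 1))‖
      ≤ ε * (t F - t 0) := by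
  have hcellError : ∀ i ∈ Finset.range F,
      (∫ s in t i..t (i + 1), f s) - (t (i + 1) - t i) • f (t (i + 1))
        = ∫ s in t i..t (i + 1), (f s - f (t (i + 1))) := fun i hi => by
    rw [intervalIntegral.integral_sub (hf i (Finset.mem_range.1 hi)) intervalIntegrable_const,
      intervalIntegral.integral_const]
  rw [← intervalIntegral.sum_integral_adjacent_intervals hf, ← Finset.sum_sub_distrib,
    Finset.sum_congr rfl hcellError, ← Finset.sum_range_sub, Finset.mul_sum]
  refine (norm_sum_le _ _).trans (Finset.sum_le_sum fun i hi => ?_)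
  have hi := Finset.mem_range.1 hi
  have hle := intervalIntegral.norm_integral_le_of_norm_le_const fun s hs =>
    hε i hi s (by rwa [uIoc_of_le (ht i hi)] at hs)
  rwa [abs_of_nonneg (sub_nonneg.2 (ht i hi))] at hle

theorem occupation_kernel_quadrature_convergence_general
    {n : ℕ} {H : Type*} [NormedAddCommGroup H] [InnerProductSpace ℝ H]
    [CompleteSpace H]
    (ι : H →ₗ[ℝ] (EuclideanSpace ℝ (Fin n) → ℝ))
    (k : EuclideanSpace ℝ (Fin n) → H)
    (hrep : ∀ (g : H) (x : EuclideanSpace ℝ (Fin n)), ι g x = ⟪g, k x⟫)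
    (hK : ContDiff ℝ 1 (fun p : EuclideanSpace ℝ (Fin n) × EuclideanSpace ℝ (Fin n) =>
      (⟪k p.2, k p.1⟫ : ℝ)))
    (T : ℝ)
    (γ : ℝ → EuclideanSpace ℝ (Fin n)) (hγ : ContDiffOn ℝ 1 γ (Set.Icc 0 T))
    (Γ : H) (hΓ : ∀ g : H, ⟪g, Γ⟫ = ∫ t in (0:ℝ)..T, ι g (γ t)) :
    ∃ C : ℝ, 0 ≤ C ∧ ∀ (F : ℕ), 0 < F → ∀ t : ℕ → ℝ,
      t 0 = 0 → t F = T → (∀ i < F, t i < t (i + 1)) →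
      ∀ h : ℝ, (∀ i < F, t (i + 1) - t i ≤ h) →
      ‖Γ - ∑ i ∈ Finset.range F, (t (i + 1) - t i) • k (γ (t (i + 1)))‖ ^ 2 ≤ C * h := by
  obtain ⟨B, hB⟩ := exists_norm_comp_sub_sq_le_mul_abs_sub hK hγ
  have hkγ : ContinuousOn (fun s => k (γ s)) (Icc 0 T) :=
    (continuous_of_continuous_featureKernel hK.continuous).comp_continuousOn hγ.continuousOn
  refine ⟨B * T ^ 2, by positivity, fun F hF t ht0 htT hstep h hmesh => ?_⟩
  have hle : ∀ i < F, t i ≤ t (i + 1) := fun i hi => (hstep i hi).le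
  have hcell : ∀ i < F, Icc (t i) (t (i + 1)) ⊆ Icc 0 T := fun i hi => by
    simpa only [ht0, htT] using Icc_subset_Icc_of_le_succ hle hi
  have hT : 0 ≤ T := ht0 ▸ (hcell 0 hF (left_mem_Icc.2 (hle 0 hF))).2
  have hh : 0 ≤ h := (sub_nonneg.2 (hle 0 hF)).trans (hmesh 0 hF)
  have hΓint : Γ = ∫ s in (0:ℝ)..T, k (γ s) :=
    eq_intervalIntegral_of_forall_inner_eq_s7 (hkγ.intervalIntegrable_of_Icc hT) fun g => by
      simp only [hΓ, hrep]
  have hdist : ∀ i < F, ∀ s ∈ Ioc (t i) (t (i + 1)), ‖k (γ s) - k (γ (t (i + 1)))‖ ≤ √(B * h) :=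
    fun i hi s hs => by
      have hsu : |s - t (i + 1)| ≤ h := by
        rw [abs_of_nonpos (by linarith [hs.2])]
        linarith [hs.1, hmesh i hi]
      refine Real.le_sqrt_of_sq_le ((hB s ?_ _ ?_).trans (by gcongr))
      · exact hcell i hi (Ioc_subset_Icc_self hs)
      · exact hcell i hi (right_mem_Icc.2 (hle i hi))
  have hbound := norm_intervalIntegral_sub_sum_le hle
    (fun i hi => (hkγ.mono (hcell i hi)).intervalIntegrable_of_Icc (hle i hi)) hdist
  rw [ht0, htT, sub_zero, ← hΓint] at hbound
  calc ‖Γ - ∑ i ∈ Finset.range F, (t (i + 1) - t i) • k (γ (t (i + 1)))‖ ^ 2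
      ≤ (√(B * h) * T) ^ 2 := pow_le_pow_left₀ (norm_nonneg _) hbound 2
    _ = B * T ^ 2 * h := by rw [mul_pow, Real.sq_sqrt (by positivity)]; ring

/-- Riemann-sum (right-hand rule) approximation of the occupation kernel:
there is `C ≥ 0` such that for every partition `0 = t₀ < t₁ < ⋯ < t_F = T` with
mesh at most `h`, the approximation `Γ̂ = Σᵢ (tᵢ − tᵢ₋₁) • k (γ tᵢ)` satisfies
`‖Γ − Γ̂‖² ≤ C * h`. -/
theorem occupation_kernel_quadrature_convergence
    {n : ℕ} (hn : 1 ≤ n) {H : Type*} [NormedAddCommGroup H] [InnerProductSpace ℝ H]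
    [CompleteSpace H]
    (ι : H →ₗ[ℝ] (EuclideanSpace ℝ (Fin n) → ℝ)) (hι : Function.Injective ι)
    (k : EuclideanSpace ℝ (Fin n) → H)
    (hrep : ∀ (g : H) (x : EuclideanSpace ℝ (Fin n)), ι g x = ⟪g, k x⟫)
    (hK : ContDiff ℝ 1 (fun p : EuclideanSpace ℝ (Fin n) × EuclideanSpace ℝ (Fin n) =>
      (⟪k p.2, k p.1⟫ : ℝ)))
    (T : ℝ) (hT : 0 < T)
    (γ : ℝ → EuclideanSpace ℝ (Fin n)) (hγ : ContDiffOn ℝ 1 γ (Set.Icc 0 T))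
    (Γ : H) (hΓ : ∀ g : H, ⟪g, Γ⟫ = ∫ t in (0:ℝ)..T, ι g (γ t)) :
    ∃ C : ℝ, 0 ≤ C ∧ ∀ (F : ℕ), 0 < F → ∀ t : ℕ → ℝ,
      t 0 = 0 → t F = T → (∀ i < F, t i < t (i + 1)) →
      ∀ h : ℝ, (∀ i < F, t (i + 1) - t i ≤ h) →
      ‖Γ - ∑ i ∈ Finset.range F, (t (i + 1) - t i) • k (γ (t (i + 1)))‖ ^ 2 ≤ C * h :=
  occupation_kernel_quadrature_convergence_general ι k hrep hK T γ hγ Γ hΓ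
end

section
/- Let T > 0, L ≥ 0 and S̃ ≥ 0, let f : ℝⁿ → ℝⁿ be Lipschitz with constant L, let η : ℝⁿ → ℝⁿ be continuous, and let x, z : [0,T] → ℝⁿ be differentiable with x'(t) = f(x t) + η(x t), z'(t) = f(z t), and z(0) = x(0). Assume k : ℝⁿ → H is continuous and satisfies ‖k a − k b‖ ≤ S̃·‖a − b‖ for all a, b in a set containing the images of x and z. Let Γ_x and Γ_z be the occupation kernels of x and z over [0,T]. Then ‖Γ_x − Γ_z‖² ≤ S̃² · T · ∫₀ᵀ e^{2 L t} ( ∫₀ᵗ e^{−L τ} ‖η(x τ)‖ dτ )² dt. -/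
/-!
Grönwall's inequality with a forcing term bounds the trajectory error `‖x t - z t‖` by
`B t = e^{L t} ∫₀ᵗ e^{-L τ} ‖η (x τ)‖ dτ`, the solution of `B' = L B + ‖η ∘ x‖`, `B 0 = 0`.
Testing the defining identity of `Γx - Γz` against `Γx - Γz` itself gives
`‖Γx - Γz‖ ≤ ∫₀ᵀ ‖k (x t) - k (z t)‖ dt ≤ S̃ ∫₀ᵀ B`, and Cauchy–Schwarz,
`(∫₀ᵀ B)² ≤ T ∫₀ᵀ B²`, finishes the proof.
-/

open scoped RealInnerProductSpace NNReal
open Real Set MeasureTheory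

theorem hasDerivWithinAt_exp_mul_integral_exp_neg_mul {g : ℝ → ℝ} {a b t : ℝ} (L : ℝ)
    (hg : ContinuousOn g (Icc a b)) (ht : t ∈ Icc a b) :
    HasDerivWithinAt (fun s => exp (L * s) * ∫ τ in a..s, exp (-L * τ) * g τ)
      (L * (exp (L * t) * ∫ τ in a..t, exp (-L * τ) * g τ) + g t) (Icc a b) t := by
  have hcont : ContinuousOn (fun τ => exp (-L * τ) * g τ) (Icc a b) :=
    (Continuous.continuousOn (by fun_prop)).mul hg
  have hFTC : HasDerivWithinAt (fun s => ∫ τ in a..s, exp (-L * τ) * g τ)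
      (exp (-L * t) * g t) (Icc a b) t :=
    have : Fact (t ∈ Icc a b) := ⟨ht⟩
    intervalIntegral.integral_hasDerivWithinAt_right
      (hcont.mono (uIcc_subset_Icc (left_mem_Icc.2 (ht.1.trans ht.2)) ht)).intervalIntegrable
      (hcont.stronglyMeasurableAtFilter_nhdsWithin measurableSet_Icc t) (hcont t ht)
  refine (((hasDerivAt_id t).const_mul L).exp.hasDerivWithinAt.mul hFTC).congr_deriv ?_
  have hinv : exp (L * t) * exp (-L * t) = 1 := by rw [← exp_add]; simp
  simp only [id]
  linear_combination g t * hinv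

section Gronwall

variable {E : Type*} [NormedAddCommGroup E] [NormedSpace ℝ E]

theorem norm_le_of_norm_deriv_right_le_linear_boundary {f f' : ℝ → E} {B g : ℝ → ℝ}
    {a b L : ℝ} (hf : ContinuousOn f (Icc a b))
    (hf' : ∀ t ∈ Ico a b, HasDerivWithinAt f (f' t) (Ici t) t)
    (ha : ‖f a‖ ≤ B a) (hB : ContinuousOn B (Icc a b))
    (hB' : ∀ t ∈ Ico a b, HasDerivWithinAt B (L * B t + g t) (Ici t) t)
    (bound : ∀ t ∈ Ico a b, ‖f' t‖ ≤ L * ‖f t‖ + g t) :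
    ∀ ⦃t⦄, t ∈ Icc a b → ‖f t‖ ≤ B t := by
  intro t ht
  -- `B + ε e^{(L+1)t}` is a strict fence for every `ε > 0`.
  have hε : ∀ ε > 0, ‖f t‖ ≤ B t + ε * exp ((L + 1) * t) := by
    intro ε hε
    have hexp : ∀ s, HasDerivAt (fun u => ε * exp ((L + 1) * u))
        (ε * (exp ((L + 1) * s) * (L + 1))) s := fun s => by
      simpa using (((hasDerivAt_id s).const_mul (L + 1)).exp).const_mul ε
    refine image_norm_le_of_norm_deriv_right_lt_deriv_boundary' hf hf'
      (B := fun u => B u + ε * exp ((L + 1) * u)) (by nlinarith [exp_pos ((L + 1) * a)])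
      (hB.add (Continuous.continuousOn (by fun_prop)))
      (fun s hs => (hB' s hs).add (hexp s).hasDerivWithinAt) (fun s hs hfs => ?_) ht
    have := bound s hs
    rw [hfs] at this
    nlinarith [mul_pos hε (exp_pos ((L + 1) * s))]
  refine le_of_forall_pos_le_add fun δ hδ => ?_
  simpa [div_mul_cancel₀ _ (exp_pos ((L + 1) * t)).ne'] using
    hε (δ / exp ((L + 1) * t)) (by positivity)

theorem norm_le_exp_mul_integral_of_norm_deriv_right_le {f f' : ℝ → E} {g : ℝ → ℝ}
    {a b L : ℝ} (hg : ContinuousOn g (Icc a b)) (hf : ContinuousOn f (Icc a b))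
    (hf' : ∀ t ∈ Ico a b, HasDerivWithinAt f (f' t) (Ici t) t) (ha : f a = 0)
    (bound : ∀ t ∈ Ico a b, ‖f' t‖ ≤ L * ‖f t‖ + g t) :
    ∀ ⦃t⦄, t ∈ Icc a b → ‖f t‖ ≤ exp (L * t) * ∫ τ in a..t, exp (-L * τ) * g τ :=
  have hB := fun t (ht : t ∈ Icc a b) => hasDerivWithinAt_exp_mul_integral_exp_neg_mul L hg ht
  norm_le_of_norm_deriv_right_le_linear_boundary hf hf' (by simp [ha])
    (fun t ht => (hB t ht).continuousWithinAt)
    (fun t ht => (hB t (Ico_subset_Icc_self ht)).mono_of_mem_nhdsWithin <|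
      Filter.mem_of_superset (Icc_mem_nhdsGE ht.2) (Icc_subset_Icc_left ht.1))
    bound

theorem norm_sub_le_of_trajectories_perturbed_ODE {v : E → E} {K : ℝ≥0}
    (hv : LipschitzWith K v) {p x z : ℝ → E} {a b : ℝ} (hp : ContinuousOn p (Icc a b))
    (hx : ContinuousOn x (Icc a b))
    (hx' : ∀ t ∈ Ico a b, HasDerivWithinAt x (v (x t) + p t) (Ici t) t)
    (hz : ContinuousOn z (Icc a b)) (hz' : ∀ t ∈ Ico a b, HasDerivWithinAt z (v (z t)) (Ici t) t)
    (ha : x a = z a) :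
    ∀ ⦃t⦄, t ∈ Icc a b → ‖x t - z t‖ ≤ exp (K * t) * ∫ τ in a..t, exp (-K * τ) * ‖p τ‖ :=
  norm_le_exp_mul_integral_of_norm_deriv_right_le hp.norm (hx.sub hz)
    (fun t ht => (hx' t ht).sub (hz' t ht)) (sub_eq_zero.2 ha) fun t _ =>
      calc ‖v (x t) + p t - v (z t)‖ = ‖(v (x t) - v (z t)) + p t‖ := by rw [add_sub_right_comm]
        _ ≤ K * ‖x t - z t‖ + ‖p t‖ :=
          (norm_add_le _ _).trans (by gcongr; exact hv.norm_sub_le _ _)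

end Gronwall

theorem norm_le_integral_norm_of_forall_inner_eq {H : Type*} [NormedAddCommGroup H]
    [InnerProductSpace ℝ H] {Γ : H} {φ : ℝ → H} {a b : ℝ} (hab : a ≤ b)
    (hφ : IntervalIntegrable φ volume a b) (hΓ : ∀ g, ⟪g, Γ⟫ = ∫ t in a..b, ⟪g, φ t⟫) :
    ‖Γ‖ ≤ ∫ t in a..b, ‖φ t‖ := by
  have hsq : ‖Γ‖ * ‖Γ‖ ≤ ‖Γ‖ * ∫ t in a..b, ‖φ t‖ :=
    calc ‖Γ‖ * ‖Γ‖ = ⟪Γ, Γ⟫ := (real_inner_self_eq_norm_mul_norm Γ).symm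
      _ = ∫ t in a..b, ⟪Γ, φ t⟫ := hΓ Γ
      _ ≤ ∫ t in a..b, ‖Γ‖ * ‖φ t‖ :=
        intervalIntegral.integral_mono_on hab ⟨hφ.1.const_inner Γ, hφ.2.const_inner Γ⟩
          (hφ.norm.const_mul _) fun t _ => real_inner_le_norm _ _
      _ = ‖Γ‖ * ∫ t in a..b, ‖φ t‖ := intervalIntegral.integral_const_mul _ _
  rcases (norm_nonneg Γ).eq_or_lt with hΓ0 | hΓ0
  · exact hΓ0 ▸ intervalIntegral.integral_nonneg hab fun _ _ => norm_nonneg _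
  · exact le_of_mul_le_mul_left hsq hΓ0

theorem norm_sub_le_integral_norm_sub_of_forall_inner_eq_integral {X H : Type*}
    [TopologicalSpace X] [NormedAddCommGroup H] [InnerProductSpace ℝ H]
    (ι : H →ₗ[ℝ] (X → ℝ)) (k : X → H) (hrep : ∀ g y, ι g y = ⟪g, k y⟫) (hk : Continuous k)
    {a b : ℝ} (hab : a ≤ b) {x z : ℝ → X} (hx : ContinuousOn x (Icc a b))
    (hz : ContinuousOn z (Icc a b)) {Γx Γz : H}
    (hΓx : ∀ g, ⟪g, Γx⟫ = ∫ t in a..b, ι g (x t)) (hΓz : ∀ g, ⟪g, Γz⟫ = ∫ t in a..b, ι g (z t)) :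
    ‖Γx - Γz‖ ≤ ∫ t in a..b, ‖k (x t) - k (z t)‖ := by
  refine norm_le_integral_norm_of_forall_inner_eq hab
    (((hk.comp_continuousOn hx).sub (hk.comp_continuousOn hz)).intervalIntegrable_of_Icc hab)
    fun g => ?_
  have hint : ∀ y : ℝ → X, ContinuousOn y (Icc a b) →
      IntervalIntegrable (fun t => ⟪g, k (y t)⟫) volume a b := fun y hy =>
    ((continuous_const.inner hk).comp_continuousOn hy).intervalIntegrable_of_Icc hab
  simp only [inner_sub_right, hΓx, hΓz, hrep]
  exact (intervalIntegral.integral_sub (hint x hx) (hint z hz)).symm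

theorem sq_intervalIntegral_le_mul_integral_sq {f : ℝ → ℝ} {a b : ℝ} (hab : a ≤ b)
    (hf : IntervalIntegrable f volume a b)
    (hf2 : IntervalIntegrable (fun t => f t ^ 2) volume a b) :
    (∫ t in a..b, f t) ^ 2 ≤ (b - a) * ∫ t in a..b, f t ^ 2 := by
  have hquad : ∀ s : ℝ, 0 ≤ (b - a) * (s * s) + (-2 * ∫ t in a..b, f t) * s
      + ∫ t in a..b, f t ^ 2 := by
    intro s
    have h : ∫ t in a..b, (f t - s) ^ 2
        = (b - a) * (s * s) + (-2 * ∫ t in a..b, f t) * s + ∫ t in a..b, f t ^ 2 := by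
      simp only [sub_sq]
      rw [intervalIntegral.integral_add (hf2.sub (hf.const_mul 2 |>.mul_const s))
        intervalIntegrable_const, intervalIntegral.integral_sub hf2 (hf.const_mul 2 |>.mul_const s),
        intervalIntegral.integral_mul_const, intervalIntegral.integral_const_mul,
        intervalIntegral.integral_const, smul_eq_mul]
      ring
    exact h ▸ intervalIntegral.integral_nonneg hab fun t _ => sq_nonneg _
  have := discrim_le_zero hquad
  rw [discrim] at this
  linarith

theorem process_noise_occupation_kernel_bound_general
    {n : ℕ} {H : Type*} [NormedAddCommGroup H] [InnerProductSpace ℝ H]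
    (ι : H →ₗ[ℝ] (EuclideanSpace ℝ (Fin n) → ℝ))
    (k : EuclideanSpace ℝ (Fin n) → H)
    (hrep : ∀ (g : H) (x : EuclideanSpace ℝ (Fin n)), ι g x = ⟪g, k x⟫)
    (hk : Continuous k)
    (T L St : ℝ) (hT : 0 < T) (hL : 0 ≤ L) (hSt : 0 ≤ St)
    (f η : EuclideanSpace ℝ (Fin n) → EuclideanSpace ℝ (Fin n))
    (hf : LipschitzWith (Real.toNNReal L) f) (hη : Continuous η)
    (x z : ℝ → EuclideanSpace ℝ (Fin n))
    (hx : ∀ t ∈ Set.Icc (0:ℝ) T, HasDerivAt x (f (x t) + η (x t)) t)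
    (hz : ∀ t ∈ Set.Icc (0:ℝ) T, HasDerivAt z (f (z t)) t)
    (h0 : z 0 = x 0)
    (Ω : Set (EuclideanSpace ℝ (Fin n)))
    (hΩx : ∀ t ∈ Set.Icc (0:ℝ) T, x t ∈ Ω)
    (hΩz : ∀ t ∈ Set.Icc (0:ℝ) T, z t ∈ Ω)
    (hkLip : ∀ a ∈ Ω, ∀ b ∈ Ω, ‖k a - k b‖ ≤ St * ‖a - b‖)
    (Γx Γz : H)
    (hΓx : ∀ g : H, ⟪g, Γx⟫ = ∫ t in (0:ℝ)..T, ι g (x t))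
    (hΓz : ∀ g : H, ⟪g, Γz⟫ = ∫ t in (0:ℝ)..T, ι g (z t)) :
    ‖Γx - Γz‖ ^ 2 ≤ St ^ 2 * T *
      ∫ t in (0:ℝ)..T, Real.exp (2 * L * t) *
        (∫ τ in (0:ℝ)..t, Real.exp (-L * τ) * ‖η (x τ)‖) ^ 2 := by
  have hxc : ContinuousOn x (Icc 0 T) := fun t ht => (hx t ht).continuousAt.continuousWithinAt
  have hzc : ContinuousOn z (Icc 0 T) := fun t ht => (hz t ht).continuousAt.continuousWithinAt
  have hηc : ContinuousOn (fun t => η (x t)) (Icc 0 T) := hη.comp_continuousOn hxc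
  set B := fun t => exp (L * t) * ∫ τ in (0:ℝ)..t, exp (-L * τ) * ‖η (x τ)‖
  have hgronwall : ∀ t ∈ Icc 0 T, ‖x t - z t‖ ≤ B t := by
    simpa only [Real.coe_toNNReal L hL] using norm_sub_le_of_trajectories_perturbed_ODE hf hηc
      hxc (fun t ht => (hx t (Ico_subset_Icc_self ht)).hasDerivWithinAt)
      hzc (fun t ht => (hz t (Ico_subset_Icc_self ht)).hasDerivWithinAt) h0.symm
  have hBc : ContinuousOn B (Icc 0 T) := fun t ht =>
    (hasDerivWithinAt_exp_mul_integral_exp_neg_mul L hηc.norm ht).continuousWithinAt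
  have hΓ : ‖Γx - Γz‖ ≤ ∫ t in (0:ℝ)..T, ‖k (x t) - k (z t)‖ :=
    norm_sub_le_integral_norm_sub_of_forall_inner_eq_integral ι k hrep hk hT.le hxc hzc hΓx hΓz
  have hkB : ∫ t in (0:ℝ)..T, ‖k (x t) - k (z t)‖ ≤ St * ∫ t in (0:ℝ)..T, B t := by
    rw [← intervalIntegral.integral_const_mul]
    exact intervalIntegral.integral_mono_on hT.le
      (((hk.comp_continuousOn hxc).sub (hk.comp_continuousOn hzc)).norm.intervalIntegrable_of_Icc
        hT.le)
      ((hBc.intervalIntegrable_of_Icc hT.le).const_mul St) fun t ht =>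
        (hkLip _ (hΩx t ht) _ (hΩz t ht)).trans (by gcongr; exact hgronwall t ht)
  calc ‖Γx - Γz‖ ^ 2 ≤ (St * ∫ t in (0:ℝ)..T, B t) ^ 2 := by gcongr; exact hΓ.trans hkB
    _ ≤ St ^ 2 * ((T - 0) * ∫ t in (0:ℝ)..T, B t ^ 2) := by
      rw [mul_pow]
      gcongr
      exact sq_intervalIntegral_le_mul_integral_sq hT.le (hBc.intervalIntegrable_of_Icc hT.le)
        ((hBc.pow 2).intervalIntegrable_of_Icc hT.le)
    _ = _ := by
      rw [sub_zero, ← mul_assoc]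
      congr 1
      refine intervalIntegral.integral_congr fun t _ => ?_
      simp only [B, mul_pow, sq (exp _), ← exp_add]
      ring_nf

/-- Effect of process noise on occupation kernels: with `x' = f(x) + η(x)`,
`z' = f(z)`, `z 0 = x 0`, `f` `L`-Lipschitz, and `k` `S̃`-Lipschitz on a set `Ω`
containing the images of `x` and `z`, the occupation kernels satisfy
`‖Γₓ − Γ_z‖² ≤ S̃² T ∫₀ᵀ e^{2Lt} (∫₀ᵗ e^{−Lτ} ‖η (x τ)‖ dτ)² dt`. -/
theorem process_noise_occupation_kernel_bound
    {n : ℕ} (hn : 1 ≤ n) {H : Type*} [NormedAddCommGroup H] [InnerProductSpace ℝ H]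
    [CompleteSpace H]
    (ι : H →ₗ[ℝ] (EuclideanSpace ℝ (Fin n) → ℝ)) (hι : Function.Injective ι)
    (k : EuclideanSpace ℝ (Fin n) → H)
    (hrep : ∀ (g : H) (x : EuclideanSpace ℝ (Fin n)), ι g x = ⟪g, k x⟫)
    (hk : Continuous k)
    (T L St : ℝ) (hT : 0 < T) (hL : 0 ≤ L) (hSt : 0 ≤ St)
    (f η : EuclideanSpace ℝ (Fin n) → EuclideanSpace ℝ (Fin n))
    (hf : LipschitzWith (Real.toNNReal L) f) (hη : Continuous η)
    (x z : ℝ → EuclideanSpace ℝ (Fin n))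
    (hx : ∀ t ∈ Set.Icc (0:ℝ) T, HasDerivAt x (f (x t) + η (x t)) t)
    (hz : ∀ t ∈ Set.Icc (0:ℝ) T, HasDerivAt z (f (z t)) t)
    (h0 : z 0 = x 0)
    (Ω : Set (EuclideanSpace ℝ (Fin n)))
    (hΩx : ∀ t ∈ Set.Icc (0:ℝ) T, x t ∈ Ω)
    (hΩz : ∀ t ∈ Set.Icc (0:ℝ) T, z t ∈ Ω)
    (hkLip : ∀ a ∈ Ω, ∀ b ∈ Ω, ‖k a - k b‖ ≤ St * ‖a - b‖)
    (Γx Γz : H)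
    (hΓx : ∀ g : H, ⟪g, Γx⟫ = ∫ t in (0:ℝ)..T, ι g (x t))
    (hΓz : ∀ g : H, ⟪g, Γz⟫ = ∫ t in (0:ℝ)..T, ι g (z t)) :
    ‖Γx - Γz‖ ^ 2 ≤ St ^ 2 * T *
      ∫ t in (0:ℝ)..T, Real.exp (2 * L * t) *
        (∫ τ in (0:ℝ)..t, Real.exp (-L * τ) * ‖η (x τ)‖) ^ 2 :=
  process_noise_occupation_kernel_bound_general ι k hrep hk T L St hT hL hSt f η hf hη x z hx hz h0
    Ω hΩx hΩz hkLip Γx Γz hΓx hΓz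
end

section
/- Let T > 0, L ≥ 0 and S̃ ≥ 0, let f : ℝⁿ → ℝⁿ be Lipschitz with constant L, let η : ℝⁿ → ℝⁿ be continuous, and let x, z : [0,T] → ℝⁿ be differentiable with x'(t) = f(x t) + η(x t), z'(t) = f(z t), and z(0) = x(0). Assume k : ℝⁿ → H is continuous with ‖k a − k b‖ ≤ S̃·‖a − b‖ for all a, b in a set containing the images of x and z, and let Γ_x and Γ_z be the occupation kernels of x and z over [0,T]. Let g ∈ H lie in both D(A_f) and D(A_η), so that g ∈ D(A_{f+η}) with A_{f+η} g = A_f g + A_η g. Then | ⟪A_{f+η} g, Γ_x⟫ − ⟪A_f g, Γ_z⟫ | ≤ ‖A_η g‖·‖Γ_x‖ + ‖A_f g‖ · S̃ · √T · √( ∫₀ᵀ e^{2 L t} ( ∫₀ᵗ e^{−L τ} ‖η(x τ)‖ dτ )² dt ). -/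
/-!
The curves `x` and `z` solve the same Lipschitz ODE up to the forcing `η ∘ x`, so by a Grönwall
argument their distance is at most `B t = e^{Lt} ∫₀ᵗ e^{-Lτ} ‖η (x τ)‖ dτ`. Splitting
`⟪A_f g + A_η g, Γₓ⟫ - ⟪A_f g, Γ_z⟫ = ⟪A_η g, Γₓ⟫ + ⟪A_f g, Γₓ - Γ_z⟫`, the first term is bounded by
Cauchy–Schwarz in `H`, and the second by `‖A_f g‖ S̃ ∫₀ᵀ ‖x t - z t‖ dt` via the Lipschitz bound on
the feature map `k`; Cauchy–Schwarz in `L²[0, T]` then gives `∫₀ᵀ B ≤ √T (∫₀ᵀ B²)^{1/2}`.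
-/

open Set Real MeasureTheory
open scoped RealInnerProductSpace NNReal

theorem ContinuousOn.exists_continuous_eqOn_Icc {α β : Type*} [LinearOrder α] [TopologicalSpace α]
    [OrderTopology α] [TopologicalSpace β] {f : α → β} {a b : α} (hab : a ≤ b)
    (hf : ContinuousOn f (Icc a b)) : ∃ g : α → β, Continuous g ∧ EqOn g f (Icc a b) :=
  ⟨IccExtend hab ((Icc a b).domRestrict f), hf.domRestrict.Icc_extend',
    fun _ ht => IccExtend_of_mem hab _ ht⟩

theorem intervalIntegral_le_sqrt_mul_sqrt_integral_sq {B : ℝ → ℝ} {a b : ℝ} (hab : a ≤ b)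
    (hB : IntervalIntegrable B volume a b)
    (hB2 : IntervalIntegrable (fun t => B t ^ 2) volume a b) :
    ∫ t in a..b, B t ≤ √(b - a) * √(∫ t in a..b, B t ^ 2) := by
  rcases hab.eq_or_lt with rfl | hab
  · simp
  set J := ∫ t in a..b, B t
  set K := ∫ t in a..b, B t ^ 2
  have hexpand : ∫ t in a..b, ((b - a) * B t - J) ^ 2 = (b - a) ^ 2 * K - (b - a) * J ^ 2 := by
    have hsq (t : ℝ) :
        ((b - a) * B t - J) ^ 2 = (b - a) ^ 2 * B t ^ 2 - 2 * (b - a) * J * B t + J ^ 2 := by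
      ring
    simp_rw [hsq]
    rw [intervalIntegral.integral_add ((hB2.const_mul _).sub (hB.const_mul _))
        intervalIntegrable_const,
      intervalIntegral.integral_sub (hB2.const_mul _) (hB.const_mul _),
      intervalIntegral.integral_const_mul, intervalIntegral.integral_const_mul,
      intervalIntegral.integral_const, smul_eq_mul]
    ring
  have hJK : J ^ 2 ≤ (b - a) * K := by
    have hnonneg := hexpand ▸
      intervalIntegral.integral_nonneg hab.le fun t _ => sq_nonneg ((b - a) * B t - J)
    nlinarith
  rw [← sqrt_mul (by linarith)]
  exact (le_abs_self J).trans (abs_le_sqrt hJK)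

/-- The solution of `B' = K B + β`, `B 0 = 0`. -/
noncomputable def forcedGronwallBound (K : ℝ) (β : ℝ → ℝ) (t : ℝ) : ℝ :=
  exp (K * t) * ∫ s in (0:ℝ)..t, exp (-K * s) * β s

section ForcedGronwall

variable {K T : ℝ} {β : ℝ → ℝ}

@[simp]
theorem forcedGronwallBound_zero : forcedGronwallBound K β 0 = 0 := by
  simp [forcedGronwallBound]

theorem sq_forcedGronwallBound (t : ℝ) :
    forcedGronwallBound K β t ^ 2 =
      exp (2 * K * t) * (∫ s in (0:ℝ)..t, exp (-K * s) * β s) ^ 2 := by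
  rw [forcedGronwallBound, mul_pow, ← exp_nat_mul]
  ring_nf

theorem forcedGronwallBound_congr {β' : ℝ → ℝ} {t : ℝ} (ht : 0 ≤ t) (h : EqOn β β' (Icc 0 t)) :
    forcedGronwallBound K β t = forcedGronwallBound K β' t := by
  unfold forcedGronwallBound
  congr 1
  refine intervalIntegral.integral_congr fun s hs => ?_
  rw [uIcc_of_le ht] at hs
  simp only [h hs]

theorem hasDerivAt_forcedGronwallBound (hβ : Continuous β) (t : ℝ) :
    HasDerivAt (forcedGronwallBound K β) (K * forcedGronwallBound K β t + β t) t := by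
  have hexp : HasDerivAt (fun s => exp (K * s)) (exp (K * t) * K) t := by
    simpa using ((hasDerivAt_id t).const_mul K).exp
  have hprim := (Continuous.integral_hasStrictDerivAt (f := fun s => exp (-K * s) * β s)
    (by fun_prop) 0 t).hasDerivAt
  have hB : HasDerivAt (forcedGronwallBound K β) _ t := hexp.mul hprim
  convert hB using 1
  rw [forcedGronwallBound, ← mul_assoc (exp (K * t)), ← exp_add]
  simp only [neg_mul, add_neg_cancel, exp_zero, one_mul]
  ring

theorem continuousOn_forcedGronwallBound (hT : 0 ≤ T) (hβ : ContinuousOn β (Icc 0 T)) :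
    ContinuousOn (forcedGronwallBound K β) (Icc 0 T) := by
  obtain ⟨β', hβ', hβ'β⟩ := hβ.exists_continuous_eqOn_Icc hT
  refine (continuous_iff_continuousAt.2 fun t =>
    (hasDerivAt_forcedGronwallBound (K := K) hβ' t).continuousAt).continuousOn.congr ?_
  exact fun t ht => forcedGronwallBound_congr ht.1 (hβ'β.symm.mono (Icc_subset_Icc_right ht.2))

variable {E : Type*} [NormedAddCommGroup E] [NormedSpace ℝ E] {u u' : ℝ → E}

theorem norm_le_forcedGronwallBound_of_continuous (hu : ContinuousOn u (Icc 0 T))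
    (hu' : ∀ t ∈ Ico 0 T, HasDerivWithinAt u (u' t) (Ici t) t) (hu0 : u 0 = 0)
    (hβ : Continuous β) (bound : ∀ t ∈ Ico 0 T, ‖u' t‖ ≤ K * ‖u t‖ + β t) :
    ∀ t ∈ Icc 0 T, ‖u t‖ ≤ forcedGronwallBound K β t := by
  intro t ht
  -- Fence `‖u‖` by the strict supersolution `B + ε e^{(K+1)·}`, then let `ε → 0`.
  have hfence : ∀ ε > 0, ‖u t‖ ≤ forcedGronwallBound K β t + ε * exp ((K + 1) * t) := by
    intro ε hε
    have hpert (s : ℝ) : HasDerivAt (fun r => ε * exp ((K + 1) * r))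
        (ε * (exp ((K + 1) * s) * (K + 1))) s := by
      simpa using (((hasDerivAt_id s).const_mul (K + 1)).exp).const_mul ε
    refine image_norm_le_of_norm_deriv_right_lt_deriv_boundary hu hu' (by simp [hu0, hε.le])
      (fun s => (hasDerivAt_forcedGronwallBound hβ s).add (hpert s)) (fun s hs heq => ?_) ht
    have hpos : 0 < ε * exp ((K + 1) * s) := mul_pos hε (exp_pos _)
    calc ‖u' s‖ ≤ K * ‖u s‖ + β s := bound s hs
      _ < _ := by rw [Pi.add_apply] at heq; rw [heq]; nlinarith
  refine le_of_forall_pos_le_add fun δ hδ => ?_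
  have hexp := exp_pos ((K + 1) * t)
  simpa [div_mul_cancel₀ _ hexp.ne'] using hfence (δ / exp ((K + 1) * t)) (by positivity)

theorem norm_le_forcedGronwallBound (hT : 0 ≤ T) (hu : ContinuousOn u (Icc 0 T))
    (hu' : ∀ t ∈ Ico 0 T, HasDerivWithinAt u (u' t) (Ici t) t) (hu0 : u 0 = 0)
    (hβ : ContinuousOn β (Icc 0 T)) (bound : ∀ t ∈ Ico 0 T, ‖u' t‖ ≤ K * ‖u t‖ + β t) :
    ∀ t ∈ Icc 0 T, ‖u t‖ ≤ forcedGronwallBound K β t := by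
  obtain ⟨β', hβ', hβ'β⟩ := hβ.exists_continuous_eqOn_Icc hT
  intro t ht
  rw [forcedGronwallBound_congr ht.1 (hβ'β.mono (Icc_subset_Icc_right ht.2)).symm]
  refine norm_le_forcedGronwallBound_of_continuous hu hu' hu0 hβ' (fun s hs => ?_) t ht
  rw [hβ'β (Ico_subset_Icc_self hs)]
  exact bound s hs

theorem norm_sub_le_forcedGronwallBound {f : E → E} {L : ℝ≥0} (hf : LipschitzWith L f)
    {e x z : ℝ → E} (hT : 0 ≤ T) (he : ContinuousOn e (Icc 0 T))
    (hx : ∀ t ∈ Icc 0 T, HasDerivAt x (f (x t) + e t) t)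
    (hz : ∀ t ∈ Icc 0 T, HasDerivAt z (f (z t)) t) (h0 : z 0 = x 0) :
    ∀ t ∈ Icc 0 T, ‖x t - z t‖ ≤ forcedGronwallBound L (fun s => ‖e s‖) t := by
  have hderiv (t) (ht : t ∈ Icc 0 T) := (hx t ht).sub (hz t ht)
  refine norm_le_forcedGronwallBound (u := fun t => x t - z t) hT
    (fun t ht => (hderiv t ht).continuousAt.continuousWithinAt)
    (fun t ht => (hderiv t (Ico_subset_Icc_self ht)).hasDerivWithinAt) (by simp [h0]) he.norm
    (fun t _ => ?_)
  calc ‖f (x t) + e t - f (z t)‖ = ‖(f (x t) - f (z t)) + e t‖ := by rw [add_sub_right_comm]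
    _ ≤ ‖f (x t) - f (z t)‖ + ‖e t‖ := norm_add_le _ _
    _ ≤ L * ‖x t - z t‖ + ‖e t‖ := by gcongr; exact hf.norm_sub_le _ _

end ForcedGronwall

theorem abs_inner_sub_inner_le_of_occupationKernel {H E : Type*} [NormedAddCommGroup H]
    [InnerProductSpace ℝ H] [NormedAddCommGroup E] {k : E → H} {Ω : Set E} {S T : ℝ}
    (hT : 0 ≤ T) (hk : ∀ a ∈ Ω, ∀ b ∈ Ω, ‖k a - k b‖ ≤ S * ‖a - b‖) {x z : ℝ → E}
    (hx : ContinuousOn x (Icc 0 T)) (hz : ContinuousOn z (Icc 0 T))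
    (hΩx : MapsTo x (Icc 0 T) Ω) (hΩz : MapsTo z (Icc 0 T) Ω) {Γx Γz : H}
    (hΓx : ∀ g : H, ⟪g, Γx⟫ = ∫ t in (0:ℝ)..T, ⟪g, k (x t)⟫)
    (hΓz : ∀ g : H, ⟪g, Γz⟫ = ∫ t in (0:ℝ)..T, ⟪g, k (z t)⟫) (g : H) :
    |⟪g, Γx⟫ - ⟪g, Γz⟫| ≤ ‖g‖ * S * ∫ t in (0:ℝ)..T, ‖x t - z t‖ := by
  have hkc : ContinuousOn k Ω :=
    (LipschitzOnWith.of_dist_le' (by simpa only [dist_eq_norm] using hk)).continuousOn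
  have hint {y : ℝ → E} (hy : ContinuousOn y (Icc 0 T)) (hΩy : MapsTo y (Icc 0 T) Ω) :
      IntervalIntegrable (fun t => ⟪g, k (y t)⟫) volume 0 T :=
    ((continuous_const.inner continuous_id).comp_continuousOn
      (hkc.comp hy hΩy)).intervalIntegrable_of_Icc hT
  calc |⟪g, Γx⟫ - ⟪g, Γz⟫| = |∫ t in (0:ℝ)..T, ⟪g, k (x t)⟫ - ⟪g, k (z t)⟫| := by
        rw [hΓx, hΓz, intervalIntegral.integral_sub (hint hx hΩx) (hint hz hΩz)]
    _ ≤ ∫ t in (0:ℝ)..T, |⟪g, k (x t)⟫ - ⟪g, k (z t)⟫| :=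
        intervalIntegral.abs_integral_le_integral_abs hT
    _ ≤ ∫ t in (0:ℝ)..T, ‖g‖ * S * ‖x t - z t‖ := by
        refine intervalIntegral.integral_mono_on hT ((hint hx hΩx).sub (hint hz hΩz)).abs
          ((continuousOn_const.mul (hx.sub hz).norm).intervalIntegrable_of_Icc hT) fun t ht => ?_
        rw [← inner_sub_right, mul_assoc]
        exact (abs_real_inner_le_norm _ _).trans
          (mul_le_mul_of_nonneg_left (hk _ (hΩx ht) _ (hΩz ht)) (norm_nonneg g))
    _ = ‖g‖ * S * ∫ t in (0:ℝ)..T, ‖x t - z t‖ := intervalIntegral.integral_const_mul _ _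

theorem process_noise_sample_bound_general
    {n : ℕ} {H : Type*} [NormedAddCommGroup H] [InnerProductSpace ℝ H]
    (ι : H →ₗ[ℝ] (EuclideanSpace ℝ (Fin n) → ℝ))
    (k : EuclideanSpace ℝ (Fin n) → H)
    (hrep : ∀ (g : H) (x : EuclideanSpace ℝ (Fin n)), ι g x = ⟪g, k x⟫)
    (T L St : ℝ) (hT : 0 < T) (hL : 0 ≤ L) (hSt : 0 ≤ St)
    (f η : EuclideanSpace ℝ (Fin n) → EuclideanSpace ℝ (Fin n))
    (hf : LipschitzWith (Real.toNNReal L) f) (hη : Continuous η)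
    (x z : ℝ → EuclideanSpace ℝ (Fin n))
    (hx : ∀ t ∈ Set.Icc (0:ℝ) T, HasDerivAt x (f (x t) + η (x t)) t)
    (hz : ∀ t ∈ Set.Icc (0:ℝ) T, HasDerivAt z (f (z t)) t)
    (h0 : z 0 = x 0)
    (Ω : Set (EuclideanSpace ℝ (Fin n)))
    (hΩx : ∀ t ∈ Set.Icc (0:ℝ) T, x t ∈ Ω)
    (hΩz : ∀ t ∈ Set.Icc (0:ℝ) T, z t ∈ Ω)
    (hkLip : ∀ a ∈ Ω, ∀ b ∈ Ω, ‖k a - k b‖ ≤ St * ‖a - b‖)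
    (Γx Γz : H)
    (hΓx : ∀ g : H, ⟪g, Γx⟫ = ∫ t in (0:ℝ)..T, ι g (x t))
    (hΓz : ∀ g : H, ⟪g, Γz⟫ = ∫ t in (0:ℝ)..T, ι g (z t))
    (g Afg Aηg : H) :
    |⟪Afg + Aηg, Γx⟫ - ⟪Afg, Γz⟫| ≤
      ‖Aηg‖ * ‖Γx‖ + ‖Afg‖ * St * Real.sqrt T *
        Real.sqrt (∫ t in (0:ℝ)..T, Real.exp (2 * L * t) *
          (∫ τ in (0:ℝ)..t, Real.exp (-L * τ) * ‖η (x τ)‖) ^ 2) := by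
  have hxc : ContinuousOn x (Icc 0 T) := fun t ht => (hx t ht).continuousAt.continuousWithinAt
  have hzc : ContinuousOn z (Icc 0 T) := fun t ht => (hz t ht).continuousAt.continuousWithinAt
  have hηx : ContinuousOn (fun t => η (x t)) (Icc 0 T) := hη.comp_continuousOn hxc
  set B := forcedGronwallBound L fun t => ‖η (x t)‖
  have hsep : ∀ t ∈ Icc 0 T, ‖x t - z t‖ ≤ B t := by
    simpa only [coe_toNNReal L hL] using norm_sub_le_forcedGronwallBound hf hT.le hηx hx hz h0
  have hB : ContinuousOn B (Icc 0 T) := continuousOn_forcedGronwallBound hT.le hηx.norm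
  simp only [hrep] at hΓx hΓz
  have hdrift : |⟪Afg, Γx⟫ - ⟪Afg, Γz⟫| ≤ ‖Afg‖ * St * (√T * √(∫ t in (0:ℝ)..T, B t ^ 2)) := by
    refine (abs_inner_sub_inner_le_of_occupationKernel hT.le hkLip hxc hzc hΩx hΩz hΓx hΓz
      Afg).trans (mul_le_mul_of_nonneg_left ?_ (mul_nonneg (norm_nonneg _) hSt))
    calc ∫ t in (0:ℝ)..T, ‖x t - z t‖ ≤ ∫ t in (0:ℝ)..T, B t :=
          intervalIntegral.integral_mono_on hT.le
            ((hxc.sub hzc).norm.intervalIntegrable_of_Icc hT.le)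
            (hB.intervalIntegrable_of_Icc hT.le) hsep
      _ ≤ √T * √(∫ t in (0:ℝ)..T, B t ^ 2) := by
          simpa only [sub_zero] using intervalIntegral_le_sqrt_mul_sqrt_integral_sq hT.le
            (hB.intervalIntegrable_of_Icc hT.le) ((hB.pow 2).intervalIntegrable_of_Icc hT.le)
  calc |⟪Afg + Aηg, Γx⟫ - ⟪Afg, Γz⟫| = |⟪Aηg, Γx⟫ + (⟪Afg, Γx⟫ - ⟪Afg, Γz⟫)| := by
        rw [inner_add_left]; ring_nf
    _ ≤ |⟪Aηg, Γx⟫| + |⟪Afg, Γx⟫ - ⟪Afg, Γz⟫| := abs_add_le _ _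
    _ ≤ ‖Aηg‖ * ‖Γx‖ + ‖Afg‖ * St * (√T * √(∫ t in (0:ℝ)..T, B t ^ 2)) :=
        add_le_add (abs_real_inner_le_norm _ _) hdrift
    _ = _ := by simp only [B, sq_forcedGronwallBound]; ring

/-- Error induced in the occupation-kernel samples by process noise: for
`g ∈ D(A_f) ∩ D(A_η)` (with `A_{f+η} g = A_f g + A_η g`),
`|⟪A_{f+η} g, Γₓ⟫ − ⟪A_f g, Γ_z⟫| ≤ ‖A_η g‖ ‖Γₓ‖ + ‖A_f g‖ S̃ √T √(∫₀ᵀ e^{2Lt} (∫₀ᵗ e^{−Lτ}‖η(x τ)‖dτ)² dt)`. -/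
theorem process_noise_sample_bound
    {n : ℕ} (hn : 1 ≤ n) {H : Type*} [NormedAddCommGroup H] [InnerProductSpace ℝ H]
    [CompleteSpace H]
    (ι : H →ₗ[ℝ] (EuclideanSpace ℝ (Fin n) → ℝ)) (hι : Function.Injective ι)
    (k : EuclideanSpace ℝ (Fin n) → H)
    (hrep : ∀ (g : H) (x : EuclideanSpace ℝ (Fin n)), ι g x = ⟪g, k x⟫)
    (hk : Continuous k)
    (hdiff : ∀ (g : H) (x : EuclideanSpace ℝ (Fin n)), DifferentiableAt ℝ (ι g) x)
    (T L St : ℝ) (hT : 0 < T) (hL : 0 ≤ L) (hSt : 0 ≤ St)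
    (f η : EuclideanSpace ℝ (Fin n) → EuclideanSpace ℝ (Fin n))
    (hf : LipschitzWith (Real.toNNReal L) f) (hη : Continuous η)
    (x z : ℝ → EuclideanSpace ℝ (Fin n))
    (hx : ∀ t ∈ Set.Icc (0:ℝ) T, HasDerivAt x (f (x t) + η (x t)) t)
    (hz : ∀ t ∈ Set.Icc (0:ℝ) T, HasDerivAt z (f (z t)) t)
    (h0 : z 0 = x 0)
    (Ω : Set (EuclideanSpace ℝ (Fin n)))
    (hΩx : ∀ t ∈ Set.Icc (0:ℝ) T, x t ∈ Ω)
    (hΩz : ∀ t ∈ Set.Icc (0:ℝ) T, z t ∈ Ω)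
    (hkLip : ∀ a ∈ Ω, ∀ b ∈ Ω, ‖k a - k b‖ ≤ St * ‖a - b‖)
    (Γx Γz : H)
    (hΓx : ∀ g : H, ⟪g, Γx⟫ = ∫ t in (0:ℝ)..T, ι g (x t))
    (hΓz : ∀ g : H, ⟪g, Γz⟫ = ∫ t in (0:ℝ)..T, ι g (z t))
    (g Afg Aηg : H)
    (hAf : ∀ y : EuclideanSpace ℝ (Fin n), ι Afg y = fderiv ℝ (ι g) y (f y))
    (hAη : ∀ y : EuclideanSpace ℝ (Fin n), ι Aηg y = fderiv ℝ (ι g) y (η y)) :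
    |⟪Afg + Aηg, Γx⟫ - ⟪Afg, Γz⟫| ≤
      ‖Aηg‖ * ‖Γx‖ + ‖Afg‖ * St * Real.sqrt T *
        Real.sqrt (∫ t in (0:ℝ)..T, Real.exp (2 * L * t) *
          (∫ τ in (0:ℝ)..t, Real.exp (-L * τ) * ‖η (x τ)‖) ^ 2) :=
  process_noise_sample_bound_general ι k hrep T L St hT hL hSt f η hf hη x z hx hz h0 Ω hΩx hΩz
    hkLip Γx Γz hΓx hΓz g Afg Aηg
end

section
/- Assume k : ℝⁿ → H is continuous. Let T > 0 and let h : [0,T] × [0,1] → ℝⁿ be continuous (a homotopy between the paths γ₀ = h(·,0) and γ₁ = h(·,1)). For each s ∈ [0,1] let Γ_s ∈ H be the occupation kernel of the path γ_s := t ↦ h(t,s). Then the map s ↦ Γ_s is continuous from [0,1] to H (in the Hilbert space norm). -/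
open scoped RealInnerProductSpace

/-- Continuity of occupation kernels along a homotopy: if `h : [0,T] × [0,1] → ℝⁿ`
is continuous and `Γ s` is the occupation kernel of the path `t ↦ h (t, s)`,
then `s ↦ Γ s` is continuous on `[0,1]` in the Hilbert space norm. -/
theorem occupation_kernel_homotopy_continuity
    {n : ℕ} (hn : 1 ≤ n) {H : Type*} [NormedAddCommGroup H] [InnerProductSpace ℝ H]
    [CompleteSpace H]
    (ι : H →ₗ[ℝ] (EuclideanSpace ℝ (Fin n) → ℝ)) (hι : Function.Injective ι)
    (k : EuclideanSpace ℝ (Fin n) → H)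
    (hrep : ∀ (g : H) (x : EuclideanSpace ℝ (Fin n)), ι g x = ⟪g, k x⟫)
    (hk : Continuous k)
    (T : ℝ) (hT : 0 < T)
    (h : ℝ × ℝ → EuclideanSpace ℝ (Fin n))
    (hh : ContinuousOn h (Set.Icc 0 T ×ˢ Set.Icc 0 1))
    (Γ : ℝ → H)
    (hΓ : ∀ s ∈ Set.Icc (0:ℝ) 1, ∀ g : H, ⟪g, Γ s⟫ = ∫ t in (0:ℝ)..T, ι g (h (t, s))) :
    ContinuousOn Γ (Set.Icc 0 1) := by
  -- clamp map into the domain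
  set c : ℝ × ℝ → ℝ × ℝ := fun p => (min (max p.1 0) T, min (max p.2 0) 1) with hc
  have hc_cont : Continuous c := by
    apply Continuous.prodMk <;> fun_prop
  have hc_maps : ∀ p, c p ∈ Set.Icc (0:ℝ) T ×ˢ Set.Icc (0:ℝ) 1 := by
    intro p
    constructor
    · exact ⟨le_min (le_max_right _ _) hT.le, min_le_right _ _⟩
    · exact ⟨le_min (le_max_right _ _) zero_le_one, min_le_right _ _⟩
  have hc_eq : ∀ p ∈ Set.Icc (0:ℝ) T ×ˢ Set.Icc (0:ℝ) 1, c p = p := by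
    rintro ⟨t, s⟩ ⟨⟨ht0, htT⟩, ⟨hs0, hs1⟩⟩
    simp only [hc, Prod.mk.injEq]
    constructor
    · rw [max_eq_left ht0, min_eq_left htT]
    · rw [max_eq_left hs0, min_eq_left hs1]
  set h' : ℝ × ℝ → EuclideanSpace ℝ (Fin n) := fun p => h (c p) with hh'
  have hh'_cont : Continuous h' := hh.comp_continuous hc_cont hc_maps
  set G : ℝ → H := fun s => ∫ t in (0:ℝ)..T, k (h' (t, s)) with hG
  have hG_cont : Continuous G := by
    apply intervalIntegral.continuous_parametric_intervalIntegral_of_continuous'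
      (f := fun s t => k (h' (t, s)))
    exact hk.comp (hh'_cont.comp (continuous_snd.prodMk continuous_fst))
  have hEq : ∀ s ∈ Set.Icc (0:ℝ) 1, Γ s = G s := by
    intro s hs
    apply ext_inner_left ℝ
    intro g
    rw [hΓ s hs g]
    have h1 : ∀ t ∈ Set.uIcc (0:ℝ) T, ι g (h (t, s)) = ⟪g, k (h' (t, s))⟫ := by
      intro t ht
      rw [Set.uIcc_of_le hT.le] at ht
      show ι g (h (t, s)) = ⟪g, k (h (c (t, s)))⟫
      rw [hc_eq (t, s) ⟨ht, hs⟩, hrep]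
    rw [intervalIntegral.integral_congr h1]
    simp only [hG]
    rw [intervalIntegral.integral_of_le hT.le, intervalIntegral.integral_of_le hT.le]
    have hint : MeasureTheory.IntegrableOn (fun t => k (h' (t, s))) (Set.Ioc 0 T) := by
      apply Continuous.integrableOn_Ioc
      exact hk.comp (hh'_cont.comp (Continuous.prodMk continuous_id continuous_const))
    exact integral_inner hint g
  exact (hG_cont.continuousOn).congr hEq
end

section
/- Let T > 0, let γ : [0,T] → ℝⁿ be continuous, let Y, Y' : ℝⁿ → ℝⁿ be continuous, and assume the kernel function K(x,y) = ⟪k y, k x⟫ is twice continuously differentiable on ℝⁿ × ℝⁿ and every ι g for g ∈ H is differentiable. Suppose for each t ∈ [0,T] there exist h_t, h'_t ∈ H with ⟪g, h_t⟫ = D(ι g)(γ t)(Y(γ t)) and ⟪g, h'_t⟫ = D(ι g)(γ t)(Y'(γ t)) for all g ∈ H, and that t ↦ h_t and t ↦ h'_t are continuous from [0,T] to H. Then ⟪ ∫₀ᵀ h_τ dτ , ∫₀ᵀ h'_t dt ⟫ = ∫₀ᵀ ∫₀ᵀ ∂₁∂₂K(γ t, γ τ)[Y'(γ t), Y(γ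 τ)] dτ dt, where ∂₁∂₂K(x,y)[v,w] denotes the mixed second Fréchet derivative of K at (x,y) in direction v in the first argument and direction w in the second argument. -/
open scoped RealInnerProductSpace

/-- The pre-inner product of two symbols `Y`, `Y'` along a trajectory `γ`: with
`h t = A_Y* Γ_γ`-type representers and `h' t = A_{Y'}* Γ_γ`-type representers,
`⟪∫₀ᵀ h τ dτ, ∫₀ᵀ h' t dt⟫ = ∫₀ᵀ ∫₀ᵀ ∂₁∂₂K(γ t, γ τ)[Y'(γ t), Y(γ τ)] dτ dt`,
where `K(x,y) = ⟪k y, k x⟫`. -/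
theorem pre_inner_product_double_integral
    {n : ℕ} (hn : 1 ≤ n) {H : Type*} [NormedAddCommGroup H] [InnerProductSpace ℝ H]
    [CompleteSpace H]
    (ι : H →ₗ[ℝ] (EuclideanSpace ℝ (Fin n) → ℝ)) (hι : Function.Injective ι)
    (k : EuclideanSpace ℝ (Fin n) → H)
    (hrep : ∀ (g : H) (x : EuclideanSpace ℝ (Fin n)), ι g x = ⟪g, k x⟫)
    (hK : ContDiff ℝ 2 (fun p : EuclideanSpace ℝ (Fin n) × EuclideanSpace ℝ (Fin n) =>
      (⟪k p.2, k p.1⟫ : ℝ)))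
    (hdiff : ∀ (g : H) (x : EuclideanSpace ℝ (Fin n)), DifferentiableAt ℝ (ι g) x)
    (T : ℝ) (hT : 0 < T)
    (γ : ℝ → EuclideanSpace ℝ (Fin n)) (hγ : ContinuousOn γ (Set.Icc 0 T))
    (Y Y' : EuclideanSpace ℝ (Fin n) → EuclideanSpace ℝ (Fin n))
    (hY : Continuous Y) (hY' : Continuous Y')
    (h h' : ℝ → H)
    (hhrep : ∀ t ∈ Set.Icc (0:ℝ) T, ∀ g : H,
      ⟪g, h t⟫ = fderiv ℝ (ι g) (γ t) (Y (γ t)))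
    (hh'rep : ∀ t ∈ Set.Icc (0:ℝ) T, ∀ g : H,
      ⟪g, h' t⟫ = fderiv ℝ (ι g) (γ t) (Y' (γ t)))
    (hhcont : ContinuousOn h (Set.Icc 0 T))
    (hh'cont : ContinuousOn h' (Set.Icc 0 T)) :
    ⟪∫ τ in (0:ℝ)..T, h τ, ∫ t in (0:ℝ)..T, h' t⟫ =
      ∫ t in (0:ℝ)..T, ∫ τ in (0:ℝ)..T,
        fderiv ℝ (fun x' => fderiv ℝ (fun y' => (⟪k y', k x'⟫ : ℝ)) (γ τ) (Y (γ τ)))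
          (γ t) (Y' (γ t)) := by
  have hT' : (0:ℝ) ≤ T := hT.le
  have huIcc : Set.uIcc (0:ℝ) T = Set.Icc 0 T := Set.uIcc_of_le hT'
  -- key pointwise identity
  have key : ∀ t ∈ Set.Icc (0:ℝ) T, ∀ τ ∈ Set.Icc (0:ℝ) T,
      (⟪h τ, h' t⟫ : ℝ) =
        fderiv ℝ (fun x' => fderiv ℝ (fun y' => (⟪k y', k x'⟫ : ℝ)) (γ τ) (Y (γ τ)))
          (γ t) (Y' (γ t)) := by
    intro t ht τ hτ
    have hιh : ι (h τ) =
        fun x => fderiv ℝ (fun y => (⟪k y, k x⟫ : ℝ)) (γ τ) (Y (γ τ)) := by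
      funext x
      have hk : ι (k x) = fun y => (⟪k y, k x⟫ : ℝ) := by
        funext y; rw [hrep]; exact real_inner_comm _ _
      rw [hrep, real_inner_comm, hhrep τ hτ (k x), hk]
    rw [hh'rep t ht (h τ), hιh]
  -- integrability
  have hhint : IntervalIntegrable h MeasureTheory.volume 0 T := by
    apply ContinuousOn.intervalIntegrable; rwa [huIcc]
  have hh'int : IntervalIntegrable h' MeasureTheory.volume 0 T := by
    apply ContinuousOn.intervalIntegrable; rwa [huIcc]
  set a := ∫ τ in (0:ℝ)..T, h τ with ha
  have step1 : (⟪a, ∫ t in (0:ℝ)..T, h' t⟫ : ℝ) = ∫ t in (0:ℝ)..T, (⟪a, h' t⟫ : ℝ) := by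
    exact (ContinuousLinearMap.intervalIntegral_comp_comm (innerSL ℝ a) hh'int).symm
  have step2 : ∀ t : ℝ, (⟪a, h' t⟫ : ℝ) = ∫ τ in (0:ℝ)..T, (⟪h τ, h' t⟫ : ℝ) := by
    intro t
    rw [real_inner_comm]
    have := (ContinuousLinearMap.intervalIntegral_comp_comm (innerSL ℝ (h' t)) hhint).symm
    simpa [real_inner_comm] using this
  rw [step1]
  apply intervalIntegral.integral_congr
  intro t ht
  rw [huIcc] at ht
  show (⟪a, h' t⟫ : ℝ) = _
  rw [step2 t]
  apply intervalIntegral.integral_congr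
  intro τ hτ
  rw [huIcc] at hτ
  show (⟪h τ, h' t⟫ : ℝ) = _
  exact key t ht τ hτ
end
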